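/- arXiv:2210.03210 — 2 statements merged into one kernel-verified Lean document; each statement's English description precedes it below -/
import Mathlib

section
/- Let T be a finite Branch-and-Bound tree and let A ⊆ T be a subtree containing the root such that every leaf of T that lies in A is a leaf of T. Define the incumbent as the minimum cost over leaves of T contained in A (assumed nonempty) and the best-bound as the minimum cost over 'active' nodes, i.e., nodes of A having at least one child of T outside A, together with leaves of T in A. If incumbent − best-bound ≤ ε, then the leaf achieving the incumbent has cost at most ε greater than the minimum cost over all leaves of T. -/
open Finset in
/-- In a finite Branch-and-Bound tree `T`, for a downward-closed subtree `A`
containing the root, if the incumbent (minimum cost over leaves of `T` in `A`)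
exceeds the best-bound (minimum cost over active nodes of `A` together with
leaves of `T` in `A`) by at most `ε`, then the incumbent is within `ε` of the
minimum cost over all leaves of `T`. -/
theorem bnb_gap_implies_approx_optimal {V : Type*} [Fintype V] [DecidableEq V]
    (child : V → V → Prop) [DecidableRel child] (root : V) (cost : V → ℝ) (ε : ℝ)
    (hreach : ∀ n, Relation.ReflTransGen child root n)
    (hbnb : ∀ N N', child N N' → cost N ≤ cost N')
    (A : Finset V) (hroot : root ∈ A)
    (hdc : ∀ x y, child x y → y ∈ A → x ∈ A)
    (leaves : Finset V)
    (hleaves : leaves = univ.filter (fun n => ∀ c, ¬ child n c))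
    (incumbentSet : Finset V) (hincSet : incumbentSet = leaves ∩ A)
    (hne : incumbentSet.Nonempty)
    (activeSet : Finset V)
    (hactSet : activeSet =
      A.filter (fun n => ∃ c, child n c ∧ c ∉ A) ∪ (leaves ∩ A))
    (incumbent bestBound : ℝ)
    (hinc : incumbent = (incumbentSet.image cost).min' (by simp [hne.image]))
    (hbb : bestBound = (activeSet.image cost).min'
      (by
        refine Finset.Nonempty.image ?_ _
        rw [hactSet]
        exact Finset.Nonempty.mono (Finset.subset_union_right) (hincSet ▸ hne)))
    (hgap : incumbent - bestBound ≤ ε) :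
    ∀ L ∈ leaves, incumbent ≤ cost L + ε := by
  intro L hL
  -- key: bestBound ≤ cost L
  have key : bestBound ≤ cost L := by
    by_cases hLA : L ∈ A
    · have hmem : L ∈ activeSet := by
        rw [hactSet]
        exact Finset.mem_union_right _ (Finset.mem_inter.mpr ⟨hL, hLA⟩)
      rw [hbb]
      exact Finset.min'_le _ _ (Finset.mem_image_of_mem cost hmem)
    · -- find an active ancestor
      have hpath := hreach L
      have : ∃ n, n ∈ A ∧ (∃ c, child n c ∧ c ∉ A) ∧ cost n ≤ cost L := by
        clear hL
        induction hpath with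
        | refl => exact absurd hroot hLA
        | @tail b c hb hbc ih =>
          by_cases hbA : b ∈ A
          · exact ⟨b, hbA, ⟨c, hbc, hLA⟩, hbnb b c hbc⟩
          · obtain ⟨n, hnA, hact, hcost⟩ := ih hbA
            exact ⟨n, hnA, hact, hcost.trans (hbnb b c hbc)⟩
      obtain ⟨n, hnA, hact, hcost⟩ := this
      have hmem : n ∈ activeSet := by
        rw [hactSet]
        exact Finset.mem_union_left _ (Finset.mem_filter.mpr ⟨hnA, hact⟩)
      rw [hbb]
      exact le_trans (Finset.min'_le _ _ (Finset.mem_image_of_mem cost hmem)) hcost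
  linarith
end

section
/- Let T be a finite Branch-and-Bound tree rooted at r, and let A be a downward-closed subtree of T containing r. Partition the active nodes of A into B₁, the nodes of A all of whose T-children lie outside A, and B₂, the nodes of A with at least one but not all T-children in A (in a binary tree, exactly one child in A). Then every node of T not in A has an ancestor in B₁ ∪ B₂ ∪ {children outside A of B₂ nodes}; consequently min over B₁ ∪ B₂-frontier node costs is a lower bound on the cost of every leaf of T not in A. -/
/-- For a finite Branch-and-Bound tree and a downward-closed subtree `A`
containing the root, split the active nodes of `A` into `B₁` (nodes of `A` all
of whose children lie outside `A`) and `B₂` (nodes of `A` with at least one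
but not all children in `A`).  Then every node of `T` not in `A` has an
ancestor in the frontier `B₁ ∪ B₂ ∪ {children outside A of B₂ nodes}`;
consequently the minimum frontier cost lower-bounds the cost of every leaf of
`T` not in `A`. -/
theorem bnb_frontier_lower_bound {V : Type*} [Fintype V]
    (child : V → V → Prop) (root : V) (cost : V → ℝ)
    (hreach : ∀ n, Relation.ReflTransGen child root n)
    (hbnb : ∀ N N', child N N' → cost N ≤ cost N')
    (A : Set V) (hroot : root ∈ A)
    (hdc : ∀ x y, child x y → y ∈ A → x ∈ A)
    (B1 B2 F : Set V)
    (hB1 : B1 = {n ∈ A | (∃ c, child n c) ∧ ∀ c, child n c → c ∉ A})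
    (hB2 : B2 = {n ∈ A | (∃ c, child n c ∧ c ∈ A) ∧ ∃ c, child n c ∧ c ∉ A})
    (hF : F = B1 ∪ B2 ∪ {c | ∃ n ∈ B2, child n c ∧ c ∉ A}) :
    (∀ x, x ∉ A → ∃ a ∈ F, Relation.ReflTransGen child a x) ∧
    (∀ L, L ∉ A → (∀ c, ¬ child L c) → ∃ a ∈ F, cost a ≤ cost L) := by
  have key : ∀ x, x ∉ A → ∃ a ∈ F, Relation.ReflTransGen child a x := by
    intro x hx
    induction hreach x with
    | refl => exact absurd hroot hx
    | tail hb hbc ih =>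
      rename_i b c
      by_cases hbA : b ∈ A
      · by_cases hall : ∀ c', child b c' → c' ∉ A
        · exact ⟨b, hF ▸ Or.inl (Or.inl (hB1 ▸ ⟨hbA, ⟨_, hbc⟩, hall⟩)),
            Relation.ReflTransGen.single hbc⟩
        · push_neg at hall
          obtain ⟨c', hc', hc'A⟩ := hall
          have hB2b : b ∈ B2 := hB2 ▸ ⟨hbA, ⟨c', hc', hc'A⟩, ⟨c, hbc, hx⟩⟩
          exact ⟨c, hF ▸ Or.inr ⟨b, hB2b, hbc, hx⟩, Relation.ReflTransGen.refl⟩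
      · obtain ⟨a, haF, ha⟩ := ih hbA
        exact ⟨a, haF, ha.tail hbc⟩
  have mono : ∀ {a x : V}, Relation.ReflTransGen child a x → cost a ≤ cost x := by
    intro a x h
    induction h with
    | refl => exact le_refl _
    | tail _ hc ih => exact le_trans ih (hbnb _ _ hc)
  refine ⟨key, fun L hL _ => ?_⟩
  obtain ⟨a, haF, ha⟩ := key L hL
  exact ⟨a, haF, mono ha⟩
end
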